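/- arXiv:2311.04843 — 3 statements merged into one kernel-verified Lean document; each statement's English description precedes it below -/
import Mathlib

section
/- Let Δ, Δ¹, ..., Δᵏ be k+1 exchangeable (i.i.d.) real-valued random variables. Define Δ^(k+1) := ∞ and let Δ^(1) ≤ ... ≤ Δ^(k) be the order statistics of Δ¹,...,Δᵏ. For α ∈ (0,1), let r = ⌈(k+1)(1-α)⌉ and Δ̄ := Δ^(r). Then P(Δ ≤ Δ̄) ≥ 1 - α. -/
/-!
Write `R_j = #{i | Δ_i < Δ_j}` for the strict rank of the `j`-th of the `k + 1` scores. For every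
outcome at least `r` indices have `R_j < r` (those of the `r` smallest values, in sorted order), and
by exchangeability the `k + 1` events `{R_j < r}` are equally likely, so the fresh score satisfies
`P(R_{k+1} < r) ≥ r / (k + 1) ≥ 1 - α`. Finally `R_{k+1} < r` says that fewer than `r`
calibration scores lie strictly below `Δ`, which is exactly `Δ ≤ Δ^(r)`.
-/

open MeasureTheory ProbabilityTheory

/-- The `r`-th smallest value (1-indexed) among the values `v i`, `i : Fin k`. -/
noncomputable def orderStat {k : ℕ} (v : Fin k → ℝ) (r : ℕ) : ℝ :=
  ((Multiset.map v Finset.univ.val).sort (· ≤ ·)).getD (r - 1) 0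

open Finset
open scoped ENNReal

def strictRank {ι α : Type*} [Fintype ι] [LinearOrder α] (x : ι → α) (j : ι) : ℕ :=
  #{i | x i < x j}

section Rank

variable {α : Type*} [LinearOrder α]

lemma strictRank_comp_perm {ι : Type*} [Fintype ι] (x : ι → α) (e : Equiv.Perm ι) (j : ι) :
    strictRank (x ∘ e) j = strictRank x (e j) :=
  card_equiv e (by simp)

lemma strictRank_sort_le {n : ℕ} (x : Fin n → α) (p : Fin n) :
    strictRank x (Tuple.sort x p) ≤ p := by
  have h := Tuple.lt_card_lt_iff_apply_lt_of_monotone (Tuple.monotone_sort x) (j := p)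
    (a := x (Tuple.sort x p))
  rw [← strictRank_comp_perm]
  exact not_lt.mp (h.not.mpr (lt_irrefl _))

lemma le_card_strictRank_lt {n r : ℕ} (x : Fin n → α) (hr : r ≤ n) :
    r ≤ #{j | strictRank x j < r} := by
  simpa using card_le_card_of_injOn (s := univ)
    (fun p : Fin r => Tuple.sort x (Fin.castLE hr p))
    (fun p _ => by simpa using (strictRank_sort_le x _).trans_lt p.isLt)
    ((Tuple.sort x).injective.comp (Fin.castLE_injective hr)).injOn

lemma strictRank_last {k : ℕ} (x : Fin (k + 1) → α) :
    strictRank x (Fin.last k) = #{i : Fin k | x i.castSucc < x (Fin.last k)} := by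
  rw [strictRank, card_filter, card_filter, Fin.sum_univ_castSucc]
  simp

end Rank

lemma orderStat_eq_sort {k r : ℕ} (v : Fin k → ℝ) (hr : r - 1 < k) :
    orderStat v r = v (Tuple.sort v ⟨r - 1, hr⟩) := by
  have hsorted : (Multiset.map v univ.val).sort (· ≤ ·) = List.ofFn (v ∘ Tuple.sort v) := by
    rw [Fin.univ_val_map, Multiset.coe_eq_coe.mpr ((Tuple.sort v).ofFn_comp_perm v).symm,
      Multiset.coe_sort]
    exact List.mergeSort_eq_self _ (Tuple.monotone_sort v).sortedLE_ofFn.pairwise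
  rw [orderStat, hsorted, List.getD_eq_getElem _ _ (by simpa), List.getElem_ofFn]
  rfl

lemma orderStat_lt_iff {k r : ℕ} (v : Fin k → ℝ) (t : ℝ) (h1 : 1 ≤ r) (h2 : r ≤ k) :
    orderStat v r < t ↔ r ≤ #{i | v i < t} := by
  have h := Tuple.lt_card_lt_iff_apply_lt_of_monotone (Tuple.monotone_sort v)
    (j := ⟨r - 1, by omega⟩) (a := t)
  rw [card_equiv (Tuple.sort v) (by simp) (t := {i | v i < t})] at h
  rw [orderStat_eq_sort v (by omega)]
  change (v ∘ Tuple.sort v) _ < t ↔ _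
  rw [← h, Fin.val_mk]
  omega

lemma le_orderStat_iff_strictRank_last_lt {k r : ℕ} (x : Fin (k + 1) → ℝ) (h1 : 1 ≤ r)
    (h2 : r ≤ k) :
    x (Fin.last k) ≤ orderStat (fun i : Fin k => x i.castSucc) r ↔
      strictRank x (Fin.last k) < r := by
  rw [← not_lt, orderStat_lt_iff _ _ h1 h2, not_le, strictRank_last]

section Exchangeable

variable {ι α : Type*} [MeasurableSpace α]

def IsExchangeable (ν : Measure (ι → α)) : Prop :=
  ∀ e : Equiv.Perm ι, ν.map (fun x => x ∘ e) = ν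

lemma isExchangeable_pi [Fintype ι] {μ : ι → Measure α} [∀ i, SigmaFinite (μ i)]
    (h : ∀ i j, μ i = μ j) : IsExchangeable (Measure.pi μ) := by
  intro e
  have := (measurePreserving_piCongrLeft (α := fun _ : ι => α) μ e.symm).map_eq
  rw [show (fun i => μ (e.symm i)) = μ from funext fun i => h _ i] at this
  convert this using 2
  ext x i
  rw [MeasurableEquiv.coe_piCongrLeft, Equiv.piCongrLeft_apply_eq_cast]
  simp

lemma ProbabilityTheory.iIndepFun.isExchangeable_map [Fintype ι] {Ω : Type*}
    [MeasurableSpace Ω] {P : Measure Ω} [IsProbabilityMeasure P] {X : ι → Ω → α}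
    (hmeas : ∀ i, Measurable (X i))
    (hindep : iIndepFun X P) (hident : ∀ i j, IdentDistrib (X i) (X j) P P) :
    IsExchangeable (P.map fun ω i => X i ω) := by
  rw [hindep.map_fun_eq_pi_map fun i => (hmeas i).aemeasurable]
  exact isExchangeable_pi fun i j => (hident i j).map_eq

open Classical in
lemma mul_measure_univ_le_sum_measure_of_le_card [Fintype ι] {β : Type*} [MeasurableSpace β]
    (ν : Measure β) {s : ι → Set β} (hs : ∀ i, MeasurableSet (s i)) {r : ℕ}
    (h : ∀ x, r ≤ #{i | x ∈ s i}) : r * ν Set.univ ≤ ∑ i, ν (s i) := by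
  calc r * ν Set.univ = ∫⁻ _, (r : ℝ≥0∞) ∂ν := (lintegral_const _).symm
    _ ≤ ∫⁻ x, ∑ i, (s i).indicator 1 x ∂ν := lintegral_mono fun x => by
      simpa [Set.indicator_apply, ← sum_boole] using (Nat.cast_le (α := ℝ≥0∞)).mpr (h x)
    _ = ∑ i, ν (s i) := by
      rw [lintegral_finsetSum _ fun i _ => measurable_one.indicator (hs i)]
      simp_rw [lintegral_indicator_one (hs _)]

variable [TopologicalSpace α] [LinearOrder α] [OrderClosedTopology α]
  [SecondCountableTopology α] [OpensMeasurableSpace α]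

lemma measurable_strictRank [Fintype ι] (j : ι) :
    Measurable fun x : ι → α => strictRank x j := by
  simp only [strictRank, card_filter]
  exact Finset.measurable_sum _ fun i _ => Measurable.ite
    (measurableSet_lt (measurable_pi_apply i) (measurable_pi_apply j)) measurable_const
    measurable_const

lemma measurableSet_strictRank_lt [Fintype ι] (j : ι) (r : ℕ) :
    MeasurableSet {x : ι → α | strictRank x j < r} :=
  measurable_strictRank j measurableSet_Iio

lemma IsExchangeable.measure_strictRank_lt_eq [Fintype ι] {ν : Measure (ι → α)}
    (hν : IsExchangeable ν) (r : ℕ) (i j : ι) :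
    ν {x | strictRank x i < r} = ν {x | strictRank x j < r} := by
  classical
  have hpre : (fun x => x ∘ Equiv.swap i j) ⁻¹' {x : ι → α | strictRank x i < r} =
      {x | strictRank x j < r} := by
    ext x
    simp [strictRank_comp_perm]
  rw [← hpre, ← Measure.map_apply (by fun_prop) (measurableSet_strictRank_lt i r), hν]

lemma IsExchangeable.le_mul_measure_strictRank_lt {n r : ℕ} {ν : Measure (Fin n → α)}
    [IsProbabilityMeasure ν] (hν : IsExchangeable ν) (hr : r ≤ n) (j : Fin n) :
    (r : ℝ≥0∞) ≤ n * ν {x | strictRank x j < r} :=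
  calc (r : ℝ≥0∞) = r * ν Set.univ := by simp
    _ ≤ ∑ i, ν {x | strictRank x i < r} :=
      mul_measure_univ_le_sum_measure_of_le_card ν (fun i => measurableSet_strictRank_lt i r)
        fun x => by simpa using le_card_strictRank_lt x hr
    _ = n * ν {x | strictRank x j < r} := by simp [hν.measure_strictRank_lt_eq r _ j]

end Exchangeable

/-- Basic conformal prediction guarantee: for `k+1` i.i.d. real random variables
`X 0, …, X k`, where `Δ := X (Fin.last k)` is the fresh score and the first `k`
are calibration scores, the `r`-th order statistic (with `∞` appended as the
`(k+1)`-st value) with `r = ⌈(k+1)(1-α)⌉` upper-bounds `Δ` with probability `≥ 1 - α`. -/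
theorem conformal_prediction_coverage
    {Ω : Type*} [MeasurableSpace Ω] (P : Measure Ω) [IsProbabilityMeasure P]
    (k : ℕ) (X : Fin (k + 1) → Ω → ℝ)
    (hmeas : ∀ i, Measurable (X i))
    (hindep : iIndepFun X P)
    (hident : ∀ i j, IdentDistrib (X i) (X j) P P)
    (α : ℝ) (hα : α ∈ Set.Ioo (0 : ℝ) 1)
    (r : ℕ) (hr : r = ⌈((k : ℝ) + 1) * (1 - α)⌉₊)
    (Δbar : Ω → EReal)
    (hΔbar : ∀ ω, Δbar ω =
      if r ≤ k then ((orderStat (fun i : Fin k => X i.castSucc ω) r : ℝ) : EReal)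
      else ⊤) :
    ENNReal.ofReal (1 - α) ≤ P {ω | ((X (Fin.last k) ω : ℝ) : EReal) ≤ Δbar ω} := by
  obtain ⟨hα0, hα1⟩ := hα
  by_cases hrk : r ≤ k
  swap
  · have hall : {ω | ((X (Fin.last k) ω : ℝ) : EReal) ≤ Δbar ω} = Set.univ := by
      ext ω
      simp [hΔbar ω, hrk]
    rw [hall, measure_univ]
    exact ENNReal.ofReal_le_one.mpr (by linarith)
  have hceil : ((k : ℝ) + 1) * (1 - α) ≤ r := hr ▸ Nat.le_ceil _
  have hr1 : 1 ≤ r := hr ▸ Nat.ceil_pos.mpr (by nlinarith)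
  set V : Ω → Fin (k + 1) → ℝ := fun ω i => X i ω
  have hV : Measurable V := measurable_pi_lambda _ hmeas
  have hevent : V ⁻¹' {x | strictRank x (Fin.last k) < r} =
      {ω | ((X (Fin.last k) ω : ℝ) : EReal) ≤ Δbar ω} := by
    ext ω
    rw [Set.mem_preimage, Set.mem_ofPred_eq, Set.mem_ofPred_eq, hΔbar ω, if_pos hrk,
      EReal.coe_le_coe_iff]
    exact (le_orderStat_iff_strictRank_last_lt (V ω) hr1 hrk).symm
  have := Measure.isProbabilityMeasure_map (μ := P) hV.aemeasurable
  have hcover := (hindep.isExchangeable_map hmeas hident).le_mul_measure_strictRank_lt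
    (Nat.le_succ_of_le hrk) (Fin.last k)
  rw [Measure.map_apply hV (measurableSet_strictRank_lt _ r), hevent] at hcover
  refine ENNReal.ofReal_le_of_le_toReal ?_
  have hcover' := ENNReal.toReal_mono (by finiteness) hcover
  rw [ENNReal.toReal_mul, ENNReal.toReal_natCast, ENNReal.toReal_natCast, Nat.cast_succ] at hcover'
  exact le_of_mul_le_mul_left (hceil.trans hcover') (by positivity)
end

section
/- Let φ_hd, φ_ld : ℝⁿ × ℕ → ℝⁿ with φ_hd(s, t+1) = f(φ_hd(s,t), C_hd(g(φ_hd(s,t)))) and φ_ld(s, t+1) = f(φ_ld(s,t), C_ld(φ_ld(s,t))) for dynamics f, controllers C_hd∘g and C_ld, and φ_hd(s,0)=φ_ld(s,0)=s. Suppose the inflated reachable sets are defined recursively by IR(0) = S₀ and IR(t+1) = { f(x, u) : x ∈ IR(t), u ∈ [u_min(t) - γ, u_max(t) + γ] } where [u_min(t), u_max(t)] ⊇ { C_ld(x) : x ∈ IR(t) }. Then for any s₀ ∈ S₀: if for all t < T, ‖C_hd(g(φ_hd(s₀,t))) - C_ld(φ_hd(s₀,t))‖ ≤ γ, then φ_hd(s₀,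 t) ∈ IR(t) for all t ≤ T. -/
/-- Deterministic inductive containment for the action-based approach: if at
every visited high-dimensional state the HDC action deviates from the LDC
action by at most `γ`, then the high-dimensional trajectory lies in the
recursively defined action-inflated reachable tube. Controls are scalar. -/
theorem action_inflated_tube_contains_hd_trajectory {n : ℕ} {Z : Type*}
    (f : (Fin n → ℝ) → ℝ → (Fin n → ℝ))
    (g : (Fin n → ℝ) → Z) (Chd : Z → ℝ) (Cld : (Fin n → ℝ) → ℝ)
    (φhd φld : (Fin n → ℝ) → ℕ → (Fin n → ℝ))
    (hhd0 : ∀ s, φhd s 0 = s) (hld0 : ∀ s, φld s 0 = s)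
    (hhd : ∀ s t, φhd s (t + 1) = f (φhd s t) (Chd (g (φhd s t))))
    (hld : ∀ s t, φld s (t + 1) = f (φld s t) (Cld (φld s t)))
    (S₀ : Set (Fin n → ℝ)) (IR : ℕ → Set (Fin n → ℝ))
    (umin umax : ℕ → ℝ) (γ : ℝ)
    (hIR0 : IR 0 = S₀)
    (hbound : ∀ t, ∀ x ∈ IR t, umin t ≤ Cld x ∧ Cld x ≤ umax t)
    (hIRsucc : ∀ t, IR (t + 1) =
      {y | ∃ x ∈ IR t, ∃ u : ℝ, umin t - γ ≤ u ∧ u ≤ umax t + γ ∧ y = f x u})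
    (T : ℕ) (s₀ : Fin n → ℝ) (hs₀ : s₀ ∈ S₀)
    (hdisc : ∀ t < T, |Chd (g (φhd s₀ t)) - Cld (φhd s₀ t)| ≤ γ) :
    ∀ t ≤ T, φhd s₀ t ∈ IR t := by
  intro t
  induction t with
  | zero => intro _; rw [hhd0, hIR0]; exact hs₀
  | succ t ih =>
    intro hle
    have ht : t < T := Nat.lt_of_succ_le hle
    have hmem := ih (le_of_lt hle)
    have hb := hbound t _ hmem
    have hd := hdisc t ht
    rw [hhd, hIRsucc]
    refine ⟨_, hmem, Chd (g (φhd s₀ t)), ?_, ?_, rfl⟩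
    · have := abs_le.mp hd
      linarith [hb.1, this.1]
    · have := abs_le.mp hd
      linarith [hb.2, this.2]
end

section
/- Suppose f : ℝⁿ × ℝᵐ → ℝⁿ satisfies ‖f(s, u) - f(s, u')‖₁ ≤ K‖u - u'‖₁ for all s, u, u' (Lipschitz in control), and C_hd∘g, C_ld are controllers with ‖C_hd(g(s)) - C_ld(s)‖₁ ≤ γ for all s in a set reachable by the high-dimensional trajectory. Let both systems evolve from the same s₀, and suppose additionally ‖f(s,u) - f(s',u)‖₁ ≤ M‖s - s'‖₁ and ‖C_ld(s) - C_ld(s')‖₁ ≤ L‖s - s'‖₁. Then the trajectory discrepancy satisfies ‖φ_hd(s₀,t) - φ_ld(s₀,t)‖₁ ≤ Kγ · ((M + KL)^t - 1)/((M + KL) - 1) for all t ≥ 0 (interpreting the ratio as t when M + KL = 1). -/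
/-- ℓ¹ distance. -/
noncomputable def l1dist {d : ℕ} (x y : Fin d → ℝ) : ℝ := ∑ i, |x i - y i|

lemma l1dist_self {d : ℕ} (x : Fin d → ℝ) : l1dist x x = 0 := by
  simp [l1dist]

lemma l1dist_triangle {d : ℕ} (x y z : Fin d → ℝ) :
    l1dist x z ≤ l1dist x y + l1dist y z := by
  unfold l1dist
  rw [← Finset.sum_add_distrib]
  exact Finset.sum_le_sum fun i _ => abs_sub_le (x i) (y i) (z i)

/-- Grönwall-type discrete bound relating action discrepancy `γ` to trajectory
discrepancy: with dynamics `f` Lipschitz in state (constant `M`) and control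
(constant `K`), and LDC Lipschitz with constant `L`, if the HDC and LDC actions
differ by at most `γ` along the high-dimensional trajectory, then
`‖φ_hd(s₀,t) - φ_ld(s₀,t)‖₁ ≤ Kγ·((M+KL)^t - 1)/((M+KL) - 1)`
(interpreted as `Kγ·t` when `M + KL = 1`). -/
theorem trajectory_discrepancy_gronwall {n m : ℕ} {Z : Type*}
    (f : (Fin n → ℝ) → (Fin m → ℝ) → (Fin n → ℝ))
    (g : (Fin n → ℝ) → Z) (Chd : Z → (Fin m → ℝ)) (Cld : (Fin n → ℝ) → (Fin m → ℝ))
    (K M L γ : ℝ) (hK : 0 ≤ K) (hM : 0 ≤ M) (hLnn : 0 ≤ L) (hγ : 0 ≤ γ)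
    (hfu : ∀ s u u', l1dist (f s u) (f s u') ≤ K * l1dist u u')
    (hfs : ∀ s s' u, l1dist (f s u) (f s' u) ≤ M * l1dist s s')
    (hCld : ∀ s s', l1dist (Cld s) (Cld s') ≤ L * l1dist s s')
    (φhd φld : (Fin n → ℝ) → ℕ → (Fin n → ℝ)) (s₀ : Fin n → ℝ)
    (hhd0 : φhd s₀ 0 = s₀) (hld0 : φld s₀ 0 = s₀)
    (hhd : ∀ t, φhd s₀ (t + 1) = f (φhd s₀ t) (Chd (g (φhd s₀ t))))
    (hld : ∀ t, φld s₀ (t + 1) = f (φld s₀ t) (Cld (φld s₀ t)))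
    (hdisc : ∀ t, l1dist (Chd (g (φhd s₀ t))) (Cld (φhd s₀ t)) ≤ γ) :
    ∀ t : ℕ, l1dist (φhd s₀ t) (φld s₀ t) ≤
      K * γ * (if M + K * L = 1 then (t : ℝ)
               else ((M + K * L) ^ t - 1) / ((M + K * L) - 1)) := by
  set a := M + K * L with ha
  set S : ℕ → ℝ := fun t => if a = 1 then (t : ℝ) else (a ^ t - 1) / (a - 1) with hS
  have hSrec : ∀ t, S (t + 1) = a * S t + 1 := by
    intro t
    by_cases h1 : a = 1
    · simp only [hS, if_pos h1, h1, one_mul]; push_cast; ring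
    · have h : a - 1 ≠ 0 := sub_ne_zero.mpr h1
      simp only [hS, if_neg h1]
      field_simp
      ring
  have hS0 : S 0 = 0 := by by_cases h1 : a = 1 <;> simp [hS, h1]
  have ha0 : 0 ≤ a := by positivity
  intro t
  induction t with
  | zero => simp [hhd0, hld0, l1dist_self, hS0]
  | succ t ih =>
    have key : l1dist (φhd s₀ (t+1)) (φld s₀ (t+1)) ≤
        a * l1dist (φhd s₀ t) (φld s₀ t) + K * γ := by
      rw [hhd, hld]
      calc l1dist (f (φhd s₀ t) (Chd (g (φhd s₀ t)))) (f (φld s₀ t) (Cld (φld s₀ t)))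
          ≤ l1dist (f (φhd s₀ t) (Chd (g (φhd s₀ t)))) (f (φhd s₀ t) (Cld (φld s₀ t)))
            + l1dist (f (φhd s₀ t) (Cld (φld s₀ t))) (f (φld s₀ t) (Cld (φld s₀ t))) :=
            l1dist_triangle _ _ _
        _ ≤ K * l1dist (Chd (g (φhd s₀ t))) (Cld (φld s₀ t))
            + M * l1dist (φhd s₀ t) (φld s₀ t) :=
            add_le_add (hfu _ _ _) (hfs _ _ _)
        _ ≤ K * (γ + L * l1dist (φhd s₀ t) (φld s₀ t))
            + M * l1dist (φhd s₀ t) (φld s₀ t) := by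
            gcongr
            calc l1dist (Chd (g (φhd s₀ t))) (Cld (φld s₀ t))
                ≤ l1dist (Chd (g (φhd s₀ t))) (Cld (φhd s₀ t))
                  + l1dist (Cld (φhd s₀ t)) (Cld (φld s₀ t)) := l1dist_triangle _ _ _
              _ ≤ γ + L * l1dist (φhd s₀ t) (φld s₀ t) :=
                  add_le_add (hdisc t) (hCld _ _)
        _ = a * l1dist (φhd s₀ t) (φld s₀ t) + K * γ := by ring
    calc l1dist (φhd s₀ (t+1)) (φld s₀ (t+1))
        ≤ a * l1dist (φhd s₀ t) (φld s₀ t) + K * γ := key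
      _ ≤ a * (K * γ * S t) + K * γ := by gcongr
      _ = K * γ * S (t + 1) := by rw [hSrec]; ring
end
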